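/- arXiv:math-ph/0311024 — 2 statements merged into one kernel-verified Lean document; each statement's English description precedes it below -/
import Mathlib

section
/- Fix an integer d ≥ 1. Let A ⊆ ℝ^d be compact with H_d(A) > 0. Then there exists a constant C > 0 (depending on A and d) such that for every N ≥ 2 and every N-point configuration ω*_N = {x_1,…,x_N} ⊆ A attaining the minimal d-energy (i.e., E_d(ω*_N) = ℰ_d(A,N)), one has min_{i≠j} |x_i − x_j| ≥ C · (N log N)^{−1/d}. -/
open scoped ENNReal NNReal BigOperators Classical
open MeasureTheory Filter Metric Set Topology

/-- The Riesz `s`-energy of a finite configuration `ω`, valued in `[0,∞]`. -/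
noncomputable def rieszEnergy {E : Type*} [PseudoEMetricSpace E] (s : ℝ) (ω : Finset E) : ℝ≥0∞ :=
  ∑ x ∈ ω, ∑ y ∈ ω, if x = y then 0 else edist x y ^ (-s)

/-- The `N`-point minimal Riesz `s`-energy over a set `A` (infimum over all `N`-point
subsets of `A`; `∞` if there is none). -/
noncomputable def minRieszEnergy {E : Type*} [PseudoEMetricSpace E] (s : ℝ) (A : Set E)
    (N : ℕ) : ℝ≥0∞ :=
  ⨅ (ω : Finset E) (_ : ↑ω ⊆ A) (_ : ω.card = N), rieszEnergy s ω

/-!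
Removing a point `x` from a minimizer `ω` and reinserting it at any `p ∈ A` cannot lower the
energy, so the Riesz potential of `ω \ {x}` is smallest at `x` among the points of `A`, and
`|x - y|^{-d}` is bounded by its value at every such `p`. The balls of radius `ε` around the
`N - 1` other points cover at most half of `A` once `ε = δ / N` with `δ` small, and on the rest
of `A` each kernel `|p - z|^{-d}` has integral `O(log (diam A / ε)) = O(log N)`, by splitting
into dyadic shells. Averaging over that set gives a point `p` whose potential is `O(N log N)`.
-/
noncomputable def rieszPotential {E : Type*} [PseudoEMetricSpace E] (s : ℝ) (T : Finset E)
    (p : E) : ℝ≥0∞ :=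
  ∑ z ∈ T, edist p z ^ (-s)

section RieszEnergy

variable {E : Type*}

lemma rieszEnergy_insert [PseudoEMetricSpace E] (s : ℝ) {a : E} {T : Finset E} (ha : a ∉ T) :
    rieszEnergy s (insert a T) = rieszEnergy s T + 2 * rieszPotential s T a := by
  have hne : ∀ z ∈ T, a ≠ z := fun z hz h => ha (h ▸ hz)
  have hrow : ∑ y ∈ insert a T, (if a = y then 0 else edist a y ^ (-s)) =
      rieszPotential s T a := by
    rw [Finset.sum_insert ha, if_pos rfl, zero_add]
    exact Finset.sum_congr rfl fun z hz => if_neg (hne z hz)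
  have hcol : ∀ x ∈ T, ∑ y ∈ insert a T, (if x = y then 0 else edist x y ^ (-s)) =
      edist a x ^ (-s) + ∑ y ∈ T, (if x = y then 0 else edist x y ^ (-s)) := fun x hx => by
    rw [Finset.sum_insert ha, if_neg (hne x hx).symm, edist_comm]
  rw [rieszEnergy, Finset.sum_insert ha, hrow, Finset.sum_congr rfl hcol, Finset.sum_add_distrib,
    rieszEnergy, rieszPotential]
  ring

lemma rieszEnergy_ne_top [MetricSpace E] (s : ℝ) (T : Finset E) : rieszEnergy s T ≠ ⊤ := by
  refine ENNReal.sum_ne_top.2 fun x _ => ENNReal.sum_ne_top.2 fun y _ => ?_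
  split_ifs with h
  · exact ENNReal.zero_ne_top
  · exact ENNReal.rpow_ne_top_of_ne_zero (edist_pos.2 h).ne' (edist_ne_top x y)

lemma rieszPotential_le_of_rieszEnergy_eq_min [MetricSpace E] {s : ℝ} {A : Set E} {N : ℕ}
    {ω : Finset E} (hωA : ↑ω ⊆ A) (hcard : ω.card = N)
    (hopt : rieszEnergy s ω = minRieszEnergy s A N) {x p : E} (hx : x ∈ ω) (hp : p ∈ A)
    (hpω : p ∉ ω.erase x) :
    rieszPotential s (ω.erase x) x ≤ rieszPotential s (ω.erase x) p := by
  set T := ω.erase x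
  have hpTA : ↑(insert p T) ⊆ A := by
    rw [Finset.coe_insert]
    exact Set.insert_subset hp ((Finset.coe_subset.2 (Finset.erase_subset x ω)).trans hωA)
  have hpTcard : (insert p T).card = N := by
    rw [Finset.card_insert_of_notMem hpω, Finset.card_erase_add_one hx, hcard]
  have hle : rieszEnergy s (insert x T) ≤ rieszEnergy s (insert p T) := by
    rw [Finset.insert_erase hx, hopt]
    exact iInf₂_le_of_le (insert p T) hpTA (iInf_le _ hpTcard)
  rw [rieszEnergy_insert s (Finset.notMem_erase x ω), rieszEnergy_insert s hpω,
    ENNReal.add_le_add_iff_left (rieszEnergy_ne_top s T)] at hle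
  exact (ENNReal.mul_le_mul_iff_right two_ne_zero ENNReal.ofNat_ne_top).1 hle

lemma le_dist_of_edist_rpow_neg_le [PseudoMetricSpace E] {x y : E} {s m : ℝ} (hs : 0 < s)
    (hm : 0 < m) (h : edist x y ^ (-s) ≤ ENNReal.ofReal m) : m ^ (-(1 / s)) ≤ dist x y := by
  have hxy : 0 < dist x y := by
    by_contra! h0
    rw [edist_dist, le_antisymm h0 dist_nonneg, ENNReal.ofReal_zero,
      ENNReal.zero_rpow_of_neg (neg_neg_of_pos hs)] at h
    exact ENNReal.ofReal_ne_top (top_le_iff.1 h)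
  rw [edist_dist, ENNReal.ofReal_rpow_of_pos hxy, ENNReal.ofReal_le_ofReal_iff hm.le] at h
  calc m ^ (-(1 / s)) ≤ (dist x y ^ (-s)) ^ (-(1 / s)) :=
        Real.rpow_le_rpow_of_nonpos (by positivity) h (by simp [hs.le])
    _ = dist x y := by
        rw [← Real.rpow_mul hxy.le, neg_mul_neg, mul_one_div_cancel hs.ne', Real.rpow_one]

end RieszEnergy

lemma exists_dyadic_shell {ε r : ℝ} (hεr : ε ≤ r) {K : ℕ} (hrK : r < 2 ^ K * ε) :
    ∃ j < K, 2 ^ j * ε ≤ r ∧ r < 2 * (2 ^ j * ε) := by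
  induction K with
  | zero => exact absurd hεr (by simpa using hrK)
  | succ K ih =>
    by_cases h : r < 2 ^ K * ε
    · obtain ⟨j, hj, hjr⟩ := ih h
      exact ⟨j, hj.trans (Nat.lt_succ_self K), hjr⟩
    · exact ⟨K, Nat.lt_succ_self K, not_lt.1 h, by rwa [← mul_assoc, ← pow_succ']⟩

lemma edist_rpow_neg_le_sum_indicator_ball {E : Type*} [PseudoMetricSpace E] {s : ℝ}
    (hs : 0 ≤ s) {z p : E} {ε : ℝ} {K : ℕ} (hp : p ∈ ball z (2 ^ K * ε) \ ball z ε) :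
    edist p z ^ (-s) ≤ ∑ j ∈ Finset.range K,
      (ball z (2 * (2 ^ j * ε))).indicator (fun _ => ENNReal.ofReal (2 ^ j * ε) ^ (-s)) p := by
  obtain ⟨j, hjK, hjp, hpj⟩ :=
    exists_dyadic_shell (not_lt.1 hp.2) (mem_ball.1 hp.1)
  have hj : edist p z ^ (-s) ≤ ENNReal.ofReal (2 ^ j * ε) ^ (-s) := by
    rw [ENNReal.rpow_neg, ENNReal.rpow_neg, edist_dist]
    exact ENNReal.inv_le_inv.2 (ENNReal.rpow_le_rpow (ENNReal.ofReal_le_ofReal hjp) hs)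
  refine le_trans ?_ (Finset.single_le_sum (fun _ _ => zero_le) (Finset.mem_range.2 hjK))
  rwa [Set.indicator_of_mem (mem_ball.2 hpj)]

open Module

section Haar

variable {E : Type*} [NormedAddCommGroup E] [NormedSpace ℝ E] [FiniteDimensional ℝ E]
  [MeasurableSpace E] [BorelSpace E] (μ : Measure E) [μ.IsAddHaarMeasure]

lemma ofReal_rpow_neg_finrank_mul_measure_ball_two_mul (z : E) {r : ℝ} (hr : 0 < r) :
    ENNReal.ofReal r ^ (-(finrank ℝ E : ℝ)) * μ (ball z (2 * r)) =
      2 ^ finrank ℝ E * μ (ball 0 1) := by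
  have hcancel :
      ENNReal.ofReal r ^ (-(finrank ℝ E : ℝ)) * ENNReal.ofReal r ^ finrank ℝ E = 1 := by
    rw [ENNReal.rpow_neg, ← ENNReal.rpow_natCast,
      ENNReal.inv_mul_cancel (by positivity) (by finiteness)]
  rw [Measure.addHaar_ball_of_pos μ z (by positivity), mul_pow,
    ENNReal.ofReal_mul (by positivity), ENNReal.ofReal_pow hr.le, ENNReal.ofReal_pow zero_le_two,
    ENNReal.ofReal_ofNat, ← mul_assoc, ← mul_assoc, mul_comm _ (2 ^ _), mul_assoc (2 ^ _),
    hcancel, mul_one]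

lemma setLIntegral_annulus_edist_rpow_neg_le (z : E) {ε : ℝ} (hε : 0 < ε) (K : ℕ) :
    ∫⁻ p in ball z (2 ^ K * ε) \ ball z ε, edist p z ^ (-(finrank ℝ E : ℝ)) ∂μ ≤
      K * (2 ^ finrank ℝ E * μ (ball 0 1)) := by
  have hmeas : MeasurableSet (ball z (2 ^ K * ε) \ ball z ε) :=
    measurableSet_ball.diff measurableSet_ball
  calc ∫⁻ p in ball z (2 ^ K * ε) \ ball z ε, edist p z ^ (-(finrank ℝ E : ℝ)) ∂μ
      ≤ ∫⁻ p in ball z (2 ^ K * ε) \ ball z ε, ∑ j ∈ Finset.range K,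
          (ball z (2 * (2 ^ j * ε))).indicator
            (fun _ => ENNReal.ofReal (2 ^ j * ε) ^ (-(finrank ℝ E : ℝ))) p ∂μ :=
        setLIntegral_mono' hmeas fun p hp =>
          edist_rpow_neg_le_sum_indicator_ball (Nat.cast_nonneg _) hp
    _ ≤ ∫⁻ p, ∑ j ∈ Finset.range K, (ball z (2 * (2 ^ j * ε))).indicator
            (fun _ => ENNReal.ofReal (2 ^ j * ε) ^ (-(finrank ℝ E : ℝ))) p ∂μ :=
        setLIntegral_le_lintegral _ _
    _ = ∑ j ∈ Finset.range K, ENNReal.ofReal (2 ^ j * ε) ^ (-(finrank ℝ E : ℝ)) *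
          μ (ball z (2 * (2 ^ j * ε))) := by
        rw [lintegral_finsetSum _ fun j _ => measurable_const.indicator measurableSet_ball]
        simp only [lintegral_indicator_const measurableSet_ball]
    _ = K * (2 ^ finrank ℝ E * μ (ball 0 1)) := by
        simp only [ofReal_rpow_neg_finrank_mul_measure_ball_two_mul μ z
            (by positivity : (0 : ℝ) < 2 ^ _ * ε), Finset.sum_const, Finset.card_range,
          nsmul_eq_mul]

lemma exists_mem_rieszPotential_le {A : Set E} (hA : IsCompact A) (hA0 : μ A ≠ 0)
    {T : Finset E} (hTA : ↑T ⊆ A) {ε : ℝ} (hε : 0 < ε)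
    (hball : T.card * μ (ball (0 : E) ε) ≤ μ A / 2) {K : ℕ} (hK : diam A < 2 ^ K * ε) :
    ∃ p ∈ A, p ∉ T ∧ rieszPotential (finrank ℝ E) T p ≤
      T.card * K * (2 * 2 ^ finrank ℝ E * μ (ball 0 1) / μ A) := by
  set G := A \ ⋃ z ∈ T, ball z ε
  have hAtop : μ A ≠ ⊤ := hA.measure_lt_top.ne
  have hGA : μ A / 2 ≤ μ G := by
    have hU : μ (⋃ z ∈ T, ball z ε) ≤ μ A / 2 := by
      refine (measure_biUnion_finset_le T _).trans (le_of_eq_of_le ?_ hball)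
      simp only [Measure.addHaar_ball_center μ _ ε, Finset.sum_const, nsmul_eq_mul]
    calc μ A / 2 = μ A - μ A / 2 := (ENNReal.sub_half hAtop).symm
      _ ≤ μ A - μ (⋃ z ∈ T, ball z ε) := tsub_le_tsub_left hU _
      _ ≤ μ G := le_measure_sdiff
  have hGm : MeasurableSet G :=
    hA.isClosed.measurableSet.diff (Finset.measurableSet_biUnion T fun z _ => measurableSet_ball)
  have hG0 : μ G ≠ 0 := (lt_of_lt_of_le (ENNReal.half_pos hA0) hGA).ne'
  have hGann : ∀ z ∈ T, G ⊆ ball z (2 ^ K * ε) \ ball z ε := fun z hz p hp =>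
    ⟨mem_ball.2 ((dist_le_diam_of_mem hA.isBounded hp.1 (hTA hz)).trans_lt hK),
      fun hpz => hp.2 (Set.mem_biUnion hz hpz)⟩
  have hmeas : ∀ z : E, Measurable fun p : E => edist p z ^ (-(finrank ℝ E : ℝ)) := by
    fun_prop
  have hint : ∫⁻ p in G, rieszPotential (finrank ℝ E) T p ∂μ ≤
      T.card * (K * (2 ^ finrank ℝ E * μ (ball 0 1))) := by
    simp only [rieszPotential]
    rw [lintegral_finsetSum _ fun z _ => hmeas z]
    refine (Finset.sum_le_sum fun z hz => (lintegral_mono_set (hGann z hz)).trans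
      (setLIntegral_annulus_edist_rpow_neg_le μ z hε K)).trans_eq ?_
    rw [Finset.sum_const, nsmul_eq_mul]
  have : IsFiniteMeasure (μ.restrict G) :=
    isFiniteMeasure_restrict.2 (measure_ne_top_of_subset Set.sdiff_subset hAtop)
  obtain ⟨p, hpG, hp⟩ := exists_notMem_null_le_laverage (μ := μ.restrict G) (N := Gᶜ)
    (by simpa using hG0) (Finset.measurable_sum T fun z _ => hmeas z).aemeasurable
    (ae_iff.1 (ae_restrict_mem hGm))
  refine ⟨p, (Set.notMem_compl_iff.1 hpG).1,
    fun hpT => hpG fun hp' => hp'.2 (Set.mem_biUnion hpT (mem_ball_self hε)), ?_⟩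
  calc rieszPotential (finrank ℝ E) T p
      ≤ (∫⁻ p in G, rieszPotential (finrank ℝ E) T p ∂μ) / μ G := by
        rwa [laverage_eq, Measure.restrict_apply_univ] at hp
    _ ≤ T.card * (K * (2 ^ finrank ℝ E * μ (ball 0 1))) / (μ A / 2) :=
        ENNReal.div_le_div hint hGA
    _ = T.card * K * (2 * 2 ^ finrank ℝ E * μ (ball 0 1) / μ A) := by
        rw [div_eq_mul_inv _ (μ A / 2), ENNReal.inv_div (Or.inl ENNReal.ofNat_ne_top)
          (Or.inl two_ne_zero)]
        simp only [div_eq_mul_inv]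
        ring

lemma edist_rpow_neg_le_of_rieszEnergy_eq_min {A : Set E} (hA : IsCompact A) (hA0 : μ A ≠ 0)
    {N : ℕ} {ω : Finset E} (hωA : ↑ω ⊆ A) (hcard : ω.card = N)
    (hopt : rieszEnergy (finrank ℝ E) ω = minRieszEnergy (finrank ℝ E) A N)
    {x y : E} (hx : x ∈ ω) (hy : y ∈ ω) (hxy : x ≠ y) {ε : ℝ} (hε : 0 < ε)
    (hball : N * μ (ball (0 : E) ε) ≤ μ A / 2) {K : ℕ} (hK : diam A < 2 ^ K * ε) :
    edist x y ^ (-(finrank ℝ E : ℝ)) ≤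
      N * K * (2 * 2 ^ finrank ℝ E * μ (ball 0 1) / μ A) := by
  have hTN : (ω.erase x).card ≤ N := hcard ▸ Finset.card_erase_le
  have hTA : ↑(ω.erase x) ⊆ A :=
    (Finset.coe_subset.2 (Finset.erase_subset x ω)).trans hωA
  obtain ⟨p, hpA, hpT, hp⟩ := exists_mem_rieszPotential_le μ hA hA0 hTA hε
    ((mul_le_mul_left (by exact_mod_cast hTN) _).trans hball) hK
  calc edist x y ^ (-(finrank ℝ E : ℝ))
      ≤ rieszPotential (finrank ℝ E) (ω.erase x) x :=
        Finset.single_le_sum (f := fun z => edist x z ^ (-(finrank ℝ E : ℝ)))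
          (fun _ _ => zero_le) (Finset.mem_erase.2 ⟨hxy.symm, hy⟩)
    _ ≤ rieszPotential (finrank ℝ E) (ω.erase x) p :=
        rieszPotential_le_of_rieszEnergy_eq_min hωA hcard hopt hx hpA hpT
    _ ≤ N * K * (2 * 2 ^ finrank ℝ E * μ (ball 0 1) / μ A) :=
        hp.trans (by gcongr)

lemma natCast_mul_measure_ball_div_le (hE : 0 < finrank ℝ E) (x : E) (N : ℕ) (r : ℝ) :
    N * μ (ball x (r / N)) ≤ μ (ball x r) := by
  have : Nontrivial E := Module.nontrivial_of_finrank_pos hE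
  have hN : (N : ℝ) * (N : ℝ)⁻¹ ^ finrank ℝ E ≤ 1 := by
    rcases N.eq_zero_or_pos with rfl | hN
    · simp
    calc (N : ℝ) * (N : ℝ)⁻¹ ^ finrank ℝ E ≤ N * (N : ℝ)⁻¹ := by
          gcongr
          exact pow_le_of_le_one (by positivity) (inv_le_one_of_one_le₀ (by exact_mod_cast hN))
            hE.ne'
      _ = 1 := mul_inv_cancel₀ (by positivity)
  rw [div_eq_inv_mul, Measure.addHaar_ball_mul μ x (by positivity),
    Measure.addHaar_ball_center μ x r, ← mul_assoc, ← ENNReal.ofReal_natCast,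
    ← ENNReal.ofReal_mul (Nat.cast_nonneg _)]
  exact mul_le_of_le_one_left zero_le (ENNReal.ofReal_le_one.2 hN)

lemma exists_pos_measure_ball_le (hE : 0 < finrank ℝ E) {m : ℝ≥0∞} (hm : m ≠ 0) :
    ∃ δ > 0, μ (ball (0 : E) δ) ≤ m := by
  have : Nontrivial E := Module.nontrivial_of_finrank_pos hE
  have hlim : Tendsto (fun δ => μ (ball (0 : E) δ)) (𝓝[>] 0) (𝓝 0) := by
    have h := tendsto_measure_biInter_gt (μ := μ) (s := ball (0 : E)) (a := 0)
      (fun r _ => measurableSet_ball.nullMeasurableSet)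
      (fun _ _ _ hij => ball_subset_ball hij) ⟨1, one_pos, measure_ball_lt_top.ne⟩
    rwa [biInter_gt_ball, closedBall_zero, measure_singleton] at h
  obtain ⟨δ, hδ, hδpos⟩ :=
    ((hlim.eventually (gt_mem_nhds hm.bot_lt)).and self_mem_nhdsWithin).exists
  exact ⟨δ, hδpos, hδ.le⟩

lemma lt_two_pow_natLog_add_mul_div {D δ : ℝ} (hδ : 0 < δ) {k : ℕ} (hD : D < 2 ^ k * δ)
    {N : ℕ} (hN : N ≠ 0) : D < 2 ^ (Nat.log 2 N + 1 + k) * (δ / N) := by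
  have hN' : (N : ℝ) < 2 ^ (Nat.log 2 N + 1) := by
    exact_mod_cast Nat.lt_pow_succ_log_self one_lt_two N
  calc D < 2 ^ k * δ := hD
    _ ≤ 2 ^ k * δ * (2 ^ (Nat.log 2 N + 1) / N) :=
        le_mul_of_one_le_right (by positivity) ((one_le_div (by positivity)).2 hN'.le)
    _ = 2 ^ (Nat.log 2 N + 1 + k) * (δ / N) := by rw [pow_add]; ring

lemma natLog_add_mul_log_two_le {N : ℕ} (hN : 2 ≤ N) (k : ℕ) :
    ((Nat.log 2 N + 1 + k : ℕ) : ℝ) * Real.log 2 ≤ (k + 2) * Real.log N := by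
  have hn : (1 : ℝ) ≤ Nat.log 2 N := by
    exact_mod_cast Nat.le_log_of_pow_le one_lt_two (by simpa using hN)
  have hlog : (Nat.log 2 N : ℝ) * Real.log 2 ≤ Real.log N := by
    rw [← Real.log_pow]
    exact Real.log_le_log (by positivity) (by exact_mod_cast Nat.pow_log_le_self 2 (by omega))
  push_cast
  nlinarith [mul_nonneg (mul_nonneg (by positivity : (0 : ℝ) ≤ k + 1) (sub_nonneg.2 hn))
    (Real.log_pos one_lt_two).le]

theorem exists_edist_rpow_neg_le_mul_log_of_rieszEnergy_eq_min
    (hE : 0 < finrank ℝ E) {A : Set E} (hA : IsCompact A) (hA0 : μ A ≠ 0) :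
    ∃ c : ℝ, 0 < c ∧ ∀ N : ℕ, 2 ≤ N → ∀ ω : Finset E, ↑ω ⊆ A → ω.card = N →
      rieszEnergy (finrank ℝ E) ω = minRieszEnergy (finrank ℝ E) A N →
        ∀ x ∈ ω, ∀ y ∈ ω, x ≠ y →
          edist x y ^ (-(finrank ℝ E : ℝ)) ≤ ENNReal.ofReal (c * (N * Real.log N)) := by
  obtain ⟨δ, hδ, hδA⟩ := exists_pos_measure_ball_le μ hE (ENNReal.half_pos hA0).ne'
  obtain ⟨k, hk⟩ := pow_unbounded_of_one_lt (diam A / δ) one_lt_two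
  set κ := 2 * 2 ^ finrank ℝ E * μ (ball 0 1) / μ A
  have hκ : κ ≠ ⊤ := ENNReal.div_ne_top (by finiteness) hA0
  have hκ0 : κ ≠ 0 := (ENNReal.div_pos
    (mul_ne_zero (by positivity) (measure_ball_pos μ 0 one_pos).ne') hA.measure_lt_top.ne).ne'
  have hκpos : 0 < κ.toReal := ENNReal.toReal_pos hκ0 hκ
  have hL2 : 0 < Real.log 2 := Real.log_pos one_lt_two
  refine ⟨(k + 2) * κ.toReal / Real.log 2, by positivity, ?_⟩
  intro N hN ω hωA hcard hopt x hx y hy hxy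
  set K := Nat.log 2 N + 1 + k
  calc edist x y ^ (-(finrank ℝ E : ℝ)) ≤ N * K * κ :=
        edist_rpow_neg_le_of_rieszEnergy_eq_min μ hA hA0 hωA hcard hopt hx hy hxy
          (by positivity) ((natCast_mul_measure_ball_div_le μ hE 0 N δ).trans hδA)
          (lt_two_pow_natLog_add_mul_div hδ ((div_lt_iff₀ hδ).1 hk) (by omega))
    _ = ENNReal.ofReal (N * (K * κ.toReal)) := by
        rw [ENNReal.ofReal_mul (by positivity), ENNReal.ofReal_mul (by positivity),
          ENNReal.ofReal_natCast, ENNReal.ofReal_natCast, ENNReal.ofReal_toReal hκ, mul_assoc]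
    _ ≤ ENNReal.ofReal ((k + 2) * κ.toReal / Real.log 2 * (N * Real.log N)) := by
        refine ENNReal.ofReal_le_ofReal ?_
        rw [div_mul_eq_mul_div, le_div_iff₀ hL2]
        have := mul_le_mul_of_nonneg_left (natLog_add_mul_log_two_le hN k)
          (by positivity : (0 : ℝ) ≤ N * κ.toReal)
        linarith

end Haar

/-- separation of optimal `d`-energy configurations:
`min_{i≠j} |x_i - x_j| ≥ C (N log N)^{-1/d}`. -/
theorem separation_of_optimal_config_crit (d : ℕ) (hd : 1 ≤ d)
    (A : Set (EuclideanSpace ℝ (Fin d))) (hA : IsCompact A) (hA0 : 0 < volume A) :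
    ∃ C : ℝ, 0 < C ∧ ∀ N : ℕ, 2 ≤ N →
      ∀ ω : Finset (EuclideanSpace ℝ (Fin d)), ↑ω ⊆ A → ω.card = N →
        rieszEnergy (d : ℝ) ω = minRieszEnergy (d : ℝ) A N →
          ∀ x ∈ ω, ∀ y ∈ ω, x ≠ y →
            C * ((N : ℝ) * Real.log N) ^ (-(1 / (d : ℝ))) ≤ dist x y := by
  have hE : 0 < finrank ℝ (EuclideanSpace ℝ (Fin d)) := by rwa [finrank_euclideanSpace_fin]
  obtain ⟨c, hc, hsep⟩ :=
    exists_edist_rpow_neg_le_mul_log_of_rieszEnergy_eq_min volume hE hA hA0.ne'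
  rw [finrank_euclideanSpace_fin] at hsep
  refine ⟨c ^ (-(1 / (d : ℝ))), Real.rpow_pos_of_pos hc _,
    fun N hN ω hωA hcard hopt x hx y hy hxy => ?_⟩
  have hNlog : 0 < (N : ℝ) * Real.log N :=
    mul_pos (by positivity) (Real.log_pos (by norm_cast))
  rw [← Real.mul_rpow hc.le hNlog.le]
  exact le_dist_of_edist_rpow_neg_le (by positivity) (mul_pos hc hNlog)
    (hsep N hN ω hωA hcard hopt x hx y hy hxy)
end

section
/- Fix an integer d ≥ 1 and a real s > d. Let A ⊆ ℝ^d be a bounded set with nonempty interior. Then there exist positive finite constants C_0 and C_1 (depending on A, s, d but not on N) such that C_0 · N^{1+s/d} ≤ ℰ_s(A,N) ≤ C_1 · N^{1+s/d} for all integers N ≥ 2. -/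
/-!
Lower bound: let `δ x` be the distance from `x ∈ ω` to its nearest neighbour in `ω`. The balls
`B(x, δ x / 2)` are disjoint and lie in a ball of radius `2R`, so comparing volumes gives
`∑ δ x ^ d ≤ (4R) ^ d`. The energy is at least `∑ δ x ^ (-s)`, and the power mean inequality
turns the volume bound into `∑ δ x ^ (-s) ≥ N ^ (1 + s/d) (4R) ^ (-s)`.

Upper bound: a ball inside `A` contains a scaled copy of the grid `{0, …, m-1}^d` with
`m ≈ N ^ (1/d)` and spacing `≈ 1/m`. For grid points `k ≠ k'` one has
`|k - k'| ^ (-s) ≤ 2 ^ s ∏ᵢ (1 + |kᵢ - k'ᵢ|) ^ (-s/d)`, so the energy of the unit grid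
factorises into one-dimensional sums, each bounded by `∑_{n ∈ ℤ} (1 + |n|) ^ (-s/d)`, which is
finite because `s > d`. Scaling by `1/m` multiplies the energy by `≈ m ^ s`, giving
`≲ m ^ (d + s) ≈ N ^ (1 + s/d)`.
-/

open scoped ENNReal NNReal BigOperators Classical
open MeasureTheory Filter Metric Set Topology

open Finset Module

lemma pow_rpow_neg_div {x : ℝ} (hx : 0 ≤ x) {n : ℕ} (hn : n ≠ 0) (s : ℝ) :
    (x ^ n) ^ (-(s / n)) = x ^ (-s) := by
  rw [show -(s / n) = (n : ℝ)⁻¹ * -s by ring, Real.rpow_mul (by positivity),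
    Real.pow_rpow_inv_natCast hx hn]

lemma rpow_neg_le_two_rpow_mul_prod {ι : Type*} [Fintype ι] [Nonempty ι] {ρ s : ℝ} {D : ι → ℝ}
    (hs : 0 ≤ s) (hρ : 1 ≤ ρ) (hD₀ : ∀ i, 0 ≤ D i) (hD : ∀ i, D i ≤ ρ) :
    ρ ^ (-s) ≤ 2 ^ s * ∏ i, (1 + D i) ^ (-(s / Fintype.card ι)) := by
  have hprod : ∏ i, (1 + D i) ≤ (2 * ρ) ^ Fintype.card ι := by
    rw [← card_univ, ← prod_const]
    exact prod_le_prod (fun i _ => by linarith [hD₀ i]) fun i _ => by linarith [hD i]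
  calc ρ ^ (-s) = 2 ^ s * ((2 * ρ) ^ Fintype.card ι) ^ (-(s / Fintype.card ι)) := by
        rw [pow_rpow_neg_div (by positivity) Fintype.card_ne_zero, Real.mul_rpow zero_le_two
          (by positivity), ← mul_assoc, ← Real.rpow_add zero_lt_two, add_neg_cancel,
          Real.rpow_zero, one_mul]
    _ ≤ 2 ^ s * (∏ i, (1 + D i)) ^ (-(s / Fintype.card ι)) := by
        refine mul_le_mul_of_nonneg_left (Real.rpow_le_rpow_of_nonpos ?_ hprod ?_) (by positivity)
        · exact prod_pos fun i _ => by linarith [hD₀ i]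
        · exact neg_nonpos.2 (by positivity)
    _ = 2 ^ s * ∏ i, (1 + D i) ^ (-(s / Fintype.card ι)) := by
        rw [Real.finsetProd_rpow _ _ fun i _ => by linarith [hD₀ i]]

lemma card_rpow_mul_rpow_neg_le_sum_rpow_neg {ι : Type*} (u : Finset ι) {t : ι → ℝ} {K q : ℝ}
    (hq : 0 ≤ q) (ht : ∀ i ∈ u, 0 < t i) (hK : ∑ i ∈ u, t i ≤ K) :
    (#u : ℝ) ^ (1 + q) * K ^ (-q) ≤ ∑ i ∈ u, t i ^ (-q) := by
  rcases u.eq_empty_or_nonempty with rfl | hu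
  · simp [Real.zero_rpow (by positivity : 1 + q ≠ 0)]
  set T := ∑ i ∈ u, t i
  have hT : 0 < T := sum_pos ht hu
  -- Power mean inequality for the exponent `1 + q`, weights `t i / T` and values `(t i)⁻¹`.
  have hmean := Real.rpow_arith_mean_le_arith_mean_rpow u (fun i => t i / T) (fun i => (t i)⁻¹)
    (fun i hi => (div_pos (ht i hi) hT).le) (by rw [← sum_div, div_self hT.ne'])
    (fun i hi => (inv_pos.2 (ht i hi)).le) (le_add_of_nonneg_right hq)
  have hlhs : ∑ i ∈ u, t i / T * (t i)⁻¹ = #u * T⁻¹ := by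
    rw [sum_congr rfl fun i hi => (by field_simp [(ht i hi).ne'] : t i / T * (t i)⁻¹ = T⁻¹),
      sum_const, nsmul_eq_mul]
  have hrhs : ∑ i ∈ u, t i / T * (t i)⁻¹ ^ (1 + q) = T⁻¹ * ∑ i ∈ u, t i ^ (-q) := by
    rw [mul_sum]
    refine sum_congr rfl fun i hi => ?_
    rw [Real.rpow_add (inv_pos.2 (ht i hi)), Real.rpow_one, Real.inv_rpow (ht i hi).le,
      ← Real.rpow_neg (ht i hi).le]
    field_simp [(ht i hi).ne']
  rw [hlhs, hrhs, Real.mul_rpow (by positivity) (by positivity), Real.rpow_add (inv_pos.2 hT),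
    Real.rpow_one, mul_left_comm, mul_le_mul_iff_of_pos_left (inv_pos.2 hT),
    Real.inv_rpow hT.le, ← Real.rpow_neg hT.le] at hmean
  calc (#u : ℝ) ^ (1 + q) * K ^ (-q) ≤ (#u : ℝ) ^ (1 + q) * T ^ (-q) :=
        mul_le_mul_of_nonneg_left (Real.rpow_le_rpow_of_nonpos hT hK (neg_nonpos.2 hq))
          (by positivity)
    _ ≤ ∑ i ∈ u, t i ^ (-q) := hmean

section RieszEnergy

variable {E : Type*}

lemma rieszEnergy_mono [PseudoEMetricSpace E] (s : ℝ) {ω ω' : Finset E} (h : ω ⊆ ω') :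
    rieszEnergy s ω ≤ rieszEnergy s ω' :=
  (sum_le_sum fun _ _ => sum_le_sum_of_subset h).trans (sum_le_sum_of_subset h)

lemma minRieszEnergy_le_rieszEnergy [PseudoEMetricSpace E] (s : ℝ) {A : Set E} {ω : Finset E}
    (hω : ↑ω ⊆ A) : minRieszEnergy s A #ω ≤ rieszEnergy s ω :=
  iInf₂_le_of_le ω hω (iInf_le _ rfl)

lemma le_minRieszEnergy [PseudoEMetricSpace E] {s : ℝ} {A : Set E} {N : ℕ} {c : ℝ≥0∞}
    (h : ∀ ω : Finset E, ↑ω ⊆ A → #ω = N → c ≤ rieszEnergy s ω) : c ≤ minRieszEnergy s A N :=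
  le_iInf₂ fun ω hω => le_iInf (h ω hω)

lemma rieszEnergy_image_homothety [NormedAddCommGroup E] [NormedSpace ℝ E] [DecidableEq E]
    (s : ℝ) (x₀ : E) {h : ℝ} (hh : 0 < h) (ω : Finset E) :
    rieszEnergy s (ω.image fun x => x₀ + h • x) = ENNReal.ofReal (h ^ (-s)) * rieszEnergy s ω := by
  have hinj : Function.Injective fun x : E => x₀ + h • x :=
    (add_right_injective x₀).comp (smul_right_injective E hh.ne')
  simp only [rieszEnergy, sum_image fun x _ y _ hxy => hinj hxy, mul_sum, hinj.eq_iff]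
  refine sum_congr rfl fun x _ => sum_congr rfl fun y _ => ?_
  split_ifs
  · simp
  · rw [edist_add_left, edist_smul₀, ENNReal.smul_def, smul_eq_mul,
      ENNReal.mul_rpow_of_ne_top ENNReal.coe_ne_top (edist_ne_top x y),
      ← ENNReal.ofReal_rpow_of_pos hh, ← Real.enorm_eq_ofReal hh.le]
    rfl

end RieszEnergy

section Nearest

variable {E : Type*} [MetricSpace E]

lemma exists_mem_erase_infDist_eq_dist {ω : Finset E} {x : E} (hx : x ∈ ω) (hω : 1 < #ω) :
    ∃ y ∈ ω.erase x, infDist x (ω.erase x : Set E) = dist x y := by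
  have hne : (ω.erase x).Nonempty := card_pos.1 (by rw [card_erase_of_mem hx]; omega)
  exact (ω.erase x).finite_toSet.isCompact.exists_infDist_eq_dist (coe_nonempty.2 hne) x

lemma ofReal_sum_infDist_rpow_neg_le_rieszEnergy (s : ℝ) {ω : Finset E} (hω : 1 < #ω) :
    ENNReal.ofReal (∑ x ∈ ω, infDist x (ω.erase x : Set E) ^ (-s)) ≤ rieszEnergy s ω := by
  rw [ENNReal.ofReal_sum_of_nonneg fun x _ => Real.rpow_nonneg infDist_nonneg _]
  refine sum_le_sum fun x hx => ?_
  obtain ⟨y, hy, hxy⟩ := exists_mem_erase_infDist_eq_dist hx hω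
  have hne : x ≠ y := (ne_of_mem_erase hy).symm
  calc ENNReal.ofReal (infDist x (ω.erase x : Set E) ^ (-s))
      = if x = y then 0 else edist x y ^ (-s) := by
        rw [if_neg hne, hxy, edist_dist, ENNReal.ofReal_rpow_of_pos (dist_pos.2 hne)]
    _ ≤ ∑ y ∈ ω, if x = y then 0 else edist x y ^ (-s) :=
        single_le_sum (f := fun y => if x = y then 0 else edist x y ^ (-s))
          (fun _ _ => zero_le) (mem_of_mem_erase hy)

end Nearest

lemma sum_pow_finrank_le_of_pairwiseDisjoint_ball {E : Type*} [NormedAddCommGroup E]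
    [NormedSpace ℝ E] [FiniteDimensional ℝ E] {ω : Finset E} {r : E → ℝ}
    (hr : ∀ x ∈ ω, 0 < r x) (hdisj : (ω : Set E).PairwiseDisjoint fun x => ball x (r x))
    {c : E} {R : ℝ} (hR : 0 ≤ R) (hsub : ∀ x ∈ ω, ball x (r x) ⊆ closedBall c R) :
    ∑ x ∈ ω, r x ^ finrank ℝ E ≤ R ^ finrank ℝ E := by
  let _ : MeasurableSpace E := borel E
  have : BorelSpace E := ⟨rfl⟩
  set μ : Measure E := Measure.addHaar
  have hunit₀ : μ (ball 0 1) ≠ 0 := (measure_ball_pos μ 0 one_pos).ne'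
  have hunit : μ (ball 0 1) ≠ ⊤ := measure_ball_lt_top.ne
  have hvol : ∑ x ∈ ω, μ (ball x (r x)) ≤ μ (closedBall c R) := by
    rw [← measure_biUnion_finset hdisj fun _ _ => measurableSet_ball]
    exact measure_mono (iUnion₂_subset hsub)
  rw [sum_congr rfl fun x hx => Measure.addHaar_ball_of_pos μ x (hr x hx), ← sum_mul,
    Measure.addHaar_closedBall μ c hR, ENNReal.mul_le_mul_iff_left hunit₀ hunit,
    ← ENNReal.ofReal_sum_of_nonneg fun x hx => by have := hr x hx; positivity,
    ENNReal.ofReal_le_ofReal_iff (by positivity)] at hvol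
  exact hvol

theorem ofReal_mul_card_rpow_le_rieszEnergy {E : Type*} [NormedAddCommGroup E] [NormedSpace ℝ E]
    [FiniteDimensional ℝ E] {s : ℝ} (hs : 0 ≤ s) {ω : Finset E} {c : E} {R : ℝ}
    (hω : ↑ω ⊆ closedBall c R) (hcard : 2 ≤ #ω) :
    ENNReal.ofReal ((4 * R) ^ (-s) * (#ω : ℝ) ^ (1 + s / finrank ℝ E)) ≤ rieszEnergy s ω := by
  obtain ⟨a, ha, b, hb, hab⟩ := one_lt_card.1 hcard
  have : Nontrivial E := ⟨⟨a, b, hab⟩⟩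
  set d := finrank ℝ E
  have hR : 0 ≤ R := nonneg_of_mem_closedBall (hω ha)
  set δ : E → ℝ := fun x => infDist x (ω.erase x : Set E)
  have hδ_le : ∀ x, ∀ y ∈ ω.erase x, δ x ≤ dist x y := fun x y hy =>
    infDist_le_dist_of_mem (mem_coe.2 hy)
  have hδ_pos : ∀ x ∈ ω, 0 < δ x := fun x hx => by
    obtain ⟨y, hy, hxy⟩ := exists_mem_erase_infDist_eq_dist hx hcard
    exact (dist_pos.2 (ne_of_mem_erase hy).symm).trans_eq hxy.symm
  have hdisj : (ω : Set E).PairwiseDisjoint fun x => ball x (δ x / 2) := fun x hx y hy hxy =>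
    ball_disjoint_ball <| by
      linarith [hδ_le x y (mem_erase.2 ⟨hxy.symm, hy⟩), dist_comm x y,
        hδ_le y x (mem_erase.2 ⟨hxy, hx⟩)]
  have hsub : ∀ x ∈ ω, ball x (δ x / 2) ⊆ closedBall c (2 * R) := fun x hx => by
    obtain ⟨y, hy, -⟩ := exists_mem_erase_infDist_eq_dist hx hcard
    refine ball_subset_closedBall.trans (closedBall_subset_closedBall' ?_)
    linarith [hδ_le x y hy, dist_triangle_right x y c, mem_closedBall.1 (hω hx),
      mem_closedBall.1 (hω (mem_of_mem_erase hy))]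
  have hpack : ∑ x ∈ ω, δ x ^ d ≤ (4 * R) ^ d := by
    have := sum_pow_finrank_le_of_pairwiseDisjoint_ball (fun x hx => half_pos (hδ_pos x hx))
      hdisj (by positivity) hsub
    simp only [div_pow, ← sum_div] at this
    rwa [div_le_iff₀ (by positivity), ← mul_pow, mul_right_comm,
      two_mul 2, two_add_two_eq_four] at this
  have hmean := card_rpow_mul_rpow_neg_le_sum_rpow_neg ω (q := s / d) (by positivity)
    (fun x hx => pow_pos (hδ_pos x hx) d) hpack
  rw [pow_rpow_neg_div (by positivity) finrank_pos.ne', mul_comm,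
    sum_congr rfl fun x hx => pow_rpow_neg_div (hδ_pos x hx).le finrank_pos.ne' s] at hmean
  exact (ENNReal.ofReal_le_ofReal hmean).trans (ofReal_sum_infDist_rpow_neg_le_rieszEnergy s hcard)

lemma summable_one_add_abs_rpow_neg {p : ℝ} (hp : 1 < p) :
    Summable fun n : ℤ => (1 + |(n : ℝ)|) ^ (-p) := by
  refine (Real.summable_abs_int_rpow hp).of_norm_bounded_eventually ?_
  filter_upwards [(Set.finite_singleton (0 : ℤ)).compl_mem_cofinite] with n hn
  have : 0 < |(n : ℝ)| := abs_pos.2 (Int.cast_ne_zero.2 hn)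
  rw [Real.norm_of_nonneg (by positivity)]
  exact Real.rpow_le_rpow_of_nonpos this (by linarith) (by linarith)

lemma sum_one_add_abs_sub_rpow_neg_le {p : ℝ} (hp : 1 < p) (m a : ℕ) :
    ∑ t : Fin m, (1 + |(a : ℝ) - (t : ℕ)|) ^ (-p) ≤ ∑' n : ℤ, (1 + |(n : ℝ)|) ^ (-p) := by
  have hinj : Function.Injective fun t : Fin m => (a : ℤ) - (t : ℕ) := fun t t' h => by
    simpa [Fin.ext_iff] using h
  calc ∑ t : Fin m, (1 + |(a : ℝ) - (t : ℕ)|) ^ (-p)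
      = ∑' t : Fin m, (1 + |(((a : ℤ) - (t : ℕ) : ℤ) : ℝ)|) ^ (-p) := by
        rw [tsum_fintype]
        push_cast
        rfl
    _ ≤ ∑' n : ℤ, (1 + |(n : ℝ)|) ^ (-p) :=
        tsum_comp_le_tsum_of_inj (summable_one_add_abs_rpow_neg hp) (fun _ => by positivity) hinj

lemma sum_prod_one_add_abs_sub_rpow_neg_le {ι : Type*} [Fintype ι] [DecidableEq ι] {p : ℝ}
    (hp : 1 < p) (m : ℕ) (k : ι → Fin m) :
    ∑ k' : ι → Fin m, ∏ i, (1 + |((k i : ℕ) : ℝ) - (k' i : ℕ)|) ^ (-p) ≤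
      (∑' n : ℤ, (1 + |(n : ℝ)|) ^ (-p)) ^ Fintype.card ι := by
  rw [← Fintype.prod_sum (fun i (t : Fin m) => (1 + |((k i : ℕ) : ℝ) - (t : ℕ)|) ^ (-p)),
    ← card_univ, ← prod_const]
  exact prod_le_prod (fun i _ => sum_nonneg fun _ _ => by positivity)
    fun i _ => sum_one_add_abs_sub_rpow_neg_le hp m (k i)

section CubeGrid

variable {d m : ℕ}

noncomputable def gridPoint (k : Fin d → Fin m) : EuclideanSpace ℝ (Fin d) :=
  WithLp.toLp 2 fun i => ((k i : ℕ) : ℝ)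

noncomputable def cubeGrid (d m : ℕ) : Finset (EuclideanSpace ℝ (Fin d)) :=
  univ.image (gridPoint (d := d) (m := m))

lemma gridPoint_injective : Function.Injective (gridPoint (d := d) (m := m)) :=
  fun k k' h => funext fun i => Fin.ext <| by exact_mod_cast congrFun (WithLp.toLp_injective 2 h) i

lemma card_cubeGrid : #(cubeGrid d m) = m ^ d := by
  rw [cubeGrid, card_image_of_injective _ gridPoint_injective, card_univ, Fintype.card_fun,
    Fintype.card_fin, Fintype.card_fin]

lemma norm_le_of_mem_cubeGrid {x : EuclideanSpace ℝ (Fin d)} (hx : x ∈ cubeGrid d m) :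
    ‖x‖ ≤ √d * m := by
  obtain ⟨k, -, rfl⟩ := mem_image.1 hx
  rw [EuclideanSpace.norm_eq, ← Real.sqrt_sq (by positivity : (0 : ℝ) ≤ m), ← Real.sqrt_mul
    (Nat.cast_nonneg d)]
  refine Real.sqrt_le_sqrt <|
    (sum_le_sum (g := fun _ => (m : ℝ) ^ 2) fun i _ => ?_).trans_eq (by simp)
  simp only [gridPoint, Real.norm_eq_abs, sq_abs]
  exact pow_le_pow_left₀ (Nat.cast_nonneg _) (by exact_mod_cast (k i).is_lt.le) 2

lemma dist_gridPoint_rpow_neg_le (hd : 0 < d) {s : ℝ} (hs : 0 ≤ s) {k k' : Fin d → Fin m}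
    (hkk : k ≠ k') :
    dist (gridPoint k) (gridPoint k') ^ (-s) ≤
      2 ^ s * ∏ i, (1 + |((k i : ℕ) : ℝ) - (k' i : ℕ)|) ^ (-(s / d)) := by
  have : Nonempty (Fin d) := ⟨⟨0, hd⟩⟩
  have hcoord : ∀ i, |((k i : ℕ) : ℝ) - (k' i : ℕ)| ≤ dist (gridPoint k) (gridPoint k') :=
    fun i => by
      simpa [gridPoint, Real.dist_eq] using PiLp.dist_apply_le (gridPoint k) (gridPoint k') i
  obtain ⟨i, hi⟩ := Function.ne_iff.1 hkk
  have hone : 1 ≤ dist (gridPoint k) (gridPoint k') := by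
    have : ((k i : ℕ) : ℤ) - (k' i : ℕ) ≠ 0 :=
      sub_ne_zero.2 (by exact_mod_cast Fin.val_ne_of_ne hi)
    exact le_trans (by exact_mod_cast Int.one_le_abs this) (hcoord i)
  simpa using rpow_neg_le_two_rpow_mul_prod hs hone (fun _ => abs_nonneg _) hcoord

theorem rieszEnergy_cubeGrid_le (hd : 0 < d) {s : ℝ} (hs : (d : ℝ) < s) :
    rieszEnergy s (cubeGrid d m) ≤
      ENNReal.ofReal (m ^ d * (2 ^ s * (∑' n : ℤ, (1 + |(n : ℝ)|) ^ (-(s / d))) ^ d)) := by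
  have hp : 1 < s / d := (one_lt_div (Nat.cast_pos.2 hd)).2 hs
  set W := ∑' n : ℤ, (1 + |(n : ℝ)|) ^ (-(s / d))
  set K := fun k k' : Fin d → Fin m =>
    2 ^ s * ∏ i, (1 + |((k i : ℕ) : ℝ) - (k' i : ℕ)|) ^ (-(s / d))
  have hK : ∀ k k', 0 ≤ K k k' := fun k k' => by positivity
  have hterm : ∀ k k', (if gridPoint k = gridPoint k' then 0
      else edist (gridPoint k) (gridPoint k') ^ (-s)) ≤ ENNReal.ofReal (K k k') := fun k k' => by
    split_ifs with hkk
    · exact zero_le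
    rw [edist_dist, ENNReal.ofReal_rpow_of_pos (dist_pos.2 hkk)]
    exact ENNReal.ofReal_le_ofReal <|
      dist_gridPoint_rpow_neg_le hd (by linarith) fun h => hkk (congrArg gridPoint h)
  have hrow : ∀ k, ∑ k', K k k' ≤ 2 ^ s * W ^ d := fun k => by
    rw [← mul_sum]
    exact mul_le_mul_of_nonneg_left
      ((sum_prod_one_add_abs_sub_rpow_neg_le hp m k).trans_eq (by rw [Fintype.card_fin]))
      (by positivity)
  calc rieszEnergy s (cubeGrid d m)
      = ∑ k, ∑ k', if gridPoint k = gridPoint k' then 0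
          else edist (gridPoint k) (gridPoint k') ^ (-s) := by
        simp only [rieszEnergy, cubeGrid, sum_image fun x _ y _ hxy => gridPoint_injective hxy]
        congr!
    _ ≤ ∑ k, ∑ k', ENNReal.ofReal (K k k') :=
        sum_le_sum fun k _ => sum_le_sum fun k' _ => hterm k k'
    _ = ∑ k, ENNReal.ofReal (∑ k', K k k') := by
        simp_rw [ENNReal.ofReal_sum_of_nonneg fun k' _ => hK _ k']
    _ ≤ ∑ _k : Fin d → Fin m, ENNReal.ofReal (2 ^ s * W ^ d) :=
        sum_le_sum fun k _ => ENNReal.ofReal_le_ofReal (hrow k)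
    _ = ENNReal.ofReal (m ^ d * (2 ^ s * W ^ d)) := by
        rw [sum_const, card_univ, nsmul_eq_mul,
          ENNReal.ofReal_mul (p := (m : ℝ) ^ d) (by positivity), ENNReal.ofReal_pow
          (Nat.cast_nonneg _), ENNReal.ofReal_natCast, Fintype.card_fun,
          Fintype.card_fin, Fintype.card_fin, Nat.cast_pow]

end CubeGrid

lemma exists_pow_ge_and_le_two_mul_rpow_inv {d N : ℕ} (hd : d ≠ 0) (hN : 1 ≤ N) :
    ∃ m : ℕ, 0 < m ∧ N ≤ m ^ d ∧ (m : ℝ) ≤ 2 * (N : ℝ) ^ (d : ℝ)⁻¹ := by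
  set n : ℝ := (N : ℝ) ^ (d : ℝ)⁻¹
  have hn : 1 ≤ n := Real.one_le_rpow (by exact_mod_cast hN) (by positivity)
  refine ⟨⌈n⌉₊, Nat.ceil_pos.2 (by linarith), ?_,
    by linarith [Nat.ceil_lt_add_one (by positivity : 0 ≤ n)]⟩
  have : (N : ℝ) ≤ (⌈n⌉₊ : ℝ) ^ d :=
    calc (N : ℝ) = n ^ d := (Real.rpow_inv_natCast_pow (Nat.cast_nonneg N) hd).symm
      _ ≤ _ := pow_le_pow_left₀ (by positivity) (Nat.le_ceil n) d
  exact_mod_cast this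

theorem exists_subset_ball_card_eq_pow_rieszEnergy_le {d : ℕ} (hd : 0 < d) {s : ℝ}
    (hs : (d : ℝ) < s) (x₀ : EuclideanSpace ℝ (Fin d)) {r : ℝ} (hr : 0 < r) {m : ℕ} (hm : 0 < m) :
    ∃ G : Finset (EuclideanSpace ℝ (Fin d)), ↑G ⊆ ball x₀ r ∧ #G = m ^ d ∧
      rieszEnergy s G ≤ ENNReal.ofReal ((2 * √d * m / r) ^ s *
        (m ^ d * (2 ^ s * (∑' n : ℤ, (1 + |(n : ℝ)|) ^ (-(s / d))) ^ d))) := by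
  set h := r / (2 * √d * m)
  have hh : 0 < h := div_pos hr (by positivity)
  have hinj : Function.Injective fun x : EuclideanSpace ℝ (Fin d) => x₀ + h • x :=
    (add_right_injective x₀).comp (smul_right_injective _ hh.ne')
  refine ⟨(cubeGrid d m).image fun x => x₀ + h • x, ?_, ?_, ?_⟩
  · intro y hy
    obtain ⟨x, hx, rfl⟩ := mem_image.1 (mem_coe.1 hy)
    rw [mem_ball, dist_self_add_left, norm_smul, Real.norm_of_nonneg hh.le]
    calc h * ‖x‖ ≤ h * (√d * m) := mul_le_mul_of_nonneg_left (norm_le_of_mem_cubeGrid hx) hh.le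
      _ = r / 2 := by simp only [h]; field_simp
      _ < r := half_lt_self hr
  · rw [Finset.card_image_of_injective _ hinj, card_cubeGrid]
  · rw [rieszEnergy_image_homothety s x₀ hh, ENNReal.ofReal_mul (by positivity),
      Real.rpow_neg hh.le, ← Real.inv_rpow hh.le, inv_div]
    gcongr
    exact rieszEnergy_cubeGrid_le hd hs

theorem exists_forall_exists_card_eq_rieszEnergy_le {d : ℕ} (hd : 0 < d) {s : ℝ}
    (hs : (d : ℝ) < s) (x₀ : EuclideanSpace ℝ (Fin d)) {r : ℝ} (hr : 0 < r) :
    ∃ C : ℝ, 0 < C ∧ ∀ N : ℕ, 1 ≤ N → ∃ ω : Finset (EuclideanSpace ℝ (Fin d)),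
      ↑ω ⊆ ball x₀ r ∧ #ω = N ∧ rieszEnergy s ω ≤ ENNReal.ofReal (C * N ^ (1 + s / d)) := by
  set W := ∑' n : ℤ, (1 + |(n : ℝ)|) ^ (-(s / d))
  have hW : 0 < W := (summable_one_add_abs_rpow_neg ((one_lt_div (by positivity)).2 hs)).tsum_pos
    (fun _ => by positivity) 0 (by positivity)
  refine ⟨(4 * √d / r) ^ s * 2 ^ d * (2 ^ s * W ^ d), by positivity, fun N hN => ?_⟩
  obtain ⟨m, hm, hNm, hm₂⟩ := exists_pow_ge_and_le_two_mul_rpow_inv hd.ne' hN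
  obtain ⟨G, hGr, hGcard, hGE⟩ := exists_subset_ball_card_eq_pow_rieszEnergy_le hd hs x₀ hr hm
  obtain ⟨ω, hωG, rfl⟩ := exists_subset_card_eq (hGcard ▸ hNm)
  refine ⟨ω, (coe_subset.2 hωG).trans hGr, rfl,
    (rieszEnergy_mono s hωG).trans (hGE.trans (ENNReal.ofReal_le_ofReal ?_))⟩
  have hscale : (2 * √d * m / r) ^ s ≤ (4 * √d / r) ^ s * (#ω : ℝ) ^ (s / d) := by
    rw [← inv_mul_eq_div (d : ℝ), Real.rpow_mul (Nat.cast_nonneg _),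
      ← Real.mul_rpow (by positivity) (by positivity)]
    refine Real.rpow_le_rpow (by positivity) ?_ (by linarith)
    rw [div_mul_eq_mul_div]
    gcongr ?_ / _
    nlinarith [Real.sqrt_nonneg (d : ℝ)]
  have hcount : (m : ℝ) ^ d ≤ 2 ^ d * #ω :=
    calc (m : ℝ) ^ d ≤ (2 * (#ω : ℝ) ^ (d : ℝ)⁻¹) ^ d := pow_le_pow_left₀ (by positivity) hm₂ d
      _ = 2 ^ d * #ω := by rw [mul_pow, Real.rpow_inv_natCast_pow (Nat.cast_nonneg _) hd.ne']
  calc (2 * √d * m / r) ^ s * (m ^ d * (2 ^ s * W ^ d))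
      ≤ ((4 * √d / r) ^ s * (#ω : ℝ) ^ (s / d)) * ((2 ^ d * #ω) * (2 ^ s * W ^ d)) := by
        gcongr
    _ = (4 * √d / r) ^ s * 2 ^ d * (2 ^ s * W ^ d) * #ω ^ (1 + s / d) := by
        rw [Real.rpow_add (by positivity), Real.rpow_one]
        ring

/-- for bounded `A ⊆ ℝ^d` with nonempty interior and `s > d`, the minimal
`s`-energy grows like `N^{1+s/d}`. -/
theorem minRieszEnergy_growth (d : ℕ) (hd : 1 ≤ d) (s : ℝ) (hs : (d : ℝ) < s)
    (A : Set (EuclideanSpace ℝ (Fin d))) (hA : Bornology.IsBounded A)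
    (hint : (interior A).Nonempty) :
    ∃ C₀ C₁ : ℝ, 0 < C₀ ∧ 0 < C₁ ∧ ∀ N : ℕ, 2 ≤ N →
      ENNReal.ofReal (C₀ * (N : ℝ) ^ (1 + s / (d : ℝ))) ≤ minRieszEnergy s A N ∧
      minRieszEnergy s A N ≤ ENNReal.ofReal (C₁ * (N : ℝ) ^ (1 + s / (d : ℝ))) := by
  obtain ⟨R, hR, hAR⟩ := hA.subset_closedBall_lt 0 0
  obtain ⟨x₀, hx₀⟩ := hint
  obtain ⟨r, hr, hball⟩ := isOpen_iff.1 isOpen_interior x₀ hx₀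
  obtain ⟨C₁, hC₁, hupper⟩ := exists_forall_exists_card_eq_rieszEnergy_le hd hs x₀ hr
  refine ⟨(4 * R) ^ (-s), C₁, by positivity, hC₁, fun N hN => ⟨?_, ?_⟩⟩
  · refine le_minRieszEnergy fun ω hω hcard => ?_
    subst hcard
    simpa using ofReal_mul_card_rpow_le_rieszEnergy (by linarith) (hω.trans hAR) hN
  · obtain ⟨ω, hωr, rfl, hle⟩ := hupper N (by omega)
    exact (minRieszEnergy_le_rieszEnergy s (hωr.trans (hball.trans interior_subset))).trans hle
end
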